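/- arXiv:2011.03786 — 2 statements merged into one kernel-verified Lean document; each statement's English description precedes it below -/
import Mathlib

section
/- Let α ∈ (0,1) be an irrational number and let (qₙ) be the sequence of denominators of the convergents of the regular continued fraction expansion of α. Then the statistically characterized subgroup t^s_{(qₙ)}(𝕋) is uncountable. -/
open Filter Topology

noncomputable section

/-- The circle group `𝕋 = ℝ/ℤ`. -/
abbrev Circle1 : Type := AddCircle (1 : ℝ)

/-- A set of naturals has natural density zero. -/
def DensityZero (A : Set ℕ) : Prop :=
  Tendsto (fun n : ℕ => ((A ∩ Set.Icc 1 n).ncard : ℝ) / n) atTop (𝓝 0)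

/-- Statistical convergence to `0` of a sequence in the circle. -/
def StatTendstoZero (x : ℕ → Circle1) : Prop :=
  ∀ ε : ℝ, 0 < ε → DensityZero {n : ℕ | ε ≤ ‖x n‖}

/-- The characterized subgroup `t_(a_n)(𝕋)`. -/
def charSet (a : ℕ → ℤ) : Set Circle1 :=
  {x : Circle1 | Tendsto (fun n : ℕ => a n • x) atTop (𝓝 0)}

/-- The statistically characterized subgroup `t^s_(a_n)(𝕋)`. -/
def statCharSet (a : ℕ → ℤ) : Set Circle1 :=
  {x : Circle1 | StatTendstoZero (fun n : ℕ => a n • x)}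

namespace CF

/-- Gauss-map orbit of `α`: `G α 0 = α`, `G α (n+1) = {1 / G α n}`. -/
def G (α : ℝ) : ℕ → ℝ
  | 0 => α
  | n + 1 => Int.fract (G α n)⁻¹

/-- The partial quotients of the regular continued fraction `α = [0; a 1, a 2, …]`
(with the convention `a 0 = 0`). -/
def a (α : ℝ) : ℕ → ℕ
  | 0 => 0
  | n + 1 => ⌊(G α n)⁻¹⌋₊

/-- Denominators of the convergents of the continued fraction of `α`. -/
def q (α : ℝ) : ℕ → ℕ
  | 0 => 1
  | 1 => a α 1
  | (n + 2) => a α (n + 2) * q α (n + 1) + q α n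

/-- Numerators of the convergents of the continued fraction of `α`. -/
def p (α : ℝ) : ℕ → ℕ
  | 0 => 0
  | 1 => 1
  | (n + 2) => a α (n + 2) * p α (n + 1) + p α n

/-- `θ n = q n * α - p n`. -/
def θ (α : ℝ) (n : ℕ) : ℝ := (q α n : ℝ) * α - (p α n : ℝ)

end CF

open CF

/-!
With `θₙ = qₙα - pₙ` one has `|θₙ| = 1 / (qₙ₊₁ + Gₙ₊₁ qₙ)`, so `1/(2qₙ₊₁) < |θₙ| ≤ 1/qₙ₊₁`,
and `qₙθₘ ≡ qₘθₙ (mod 1)`. For `S ⊆ ℕ` put `ξ_S = ∑_{k ∈ S} θ_{M k}` with `M k = (k+2)²`.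
Since `q` at least doubles every two steps, if `n` is at distance `> 2t` from every `M k` then
the terms with `M k < n` contribute at most `∑ q_{M k} / qₙ₊₁` and those with `M k > n` at most
`qₙ ∑ 1 / q_{M k + 1}` to `‖qₙ ξ_S‖`, both geometric sums of size `≤ 2⁻ᵗ`. The remaining `n` lie
within `2t` of a square, a set of density zero, so `ξ_S ∈ t^s_(qₙ)(𝕋)`. Each `|θ_{M k}|` exceeds
the sum of all later ones, so `S ↦ ξ_S` is injective on `𝕋`.
-/

lemma norm_coe_le_abs (x : ℝ) : ‖(x : Circle1)‖ ≤ |x| :=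
  QuotientAddGroup.norm_mk_le_norm

lemma norm_coe_add_intCast (x : ℝ) (z : ℤ) : ‖((x + z : ℝ) : Circle1)‖ = ‖(x : Circle1)‖ := by
  rw [AddCircle.coe_add, ← mul_one (z : ℝ), ← zsmul_eq_mul, AddCircle.coe_zsmul,
    AddCircle.coe_period, smul_zero, add_zero]

lemma le_pow_mul_of_two_mul_succ_le {b : ℕ → ℝ} (hb : ∀ k, 2 * b (k + 1) ≤ b k) (k : ℕ) :
    b k ≤ (1 / 2) ^ k * b 0 := by
  induction k with
  | zero => simp
  | succ k ih => rw [pow_succ]; linarith [hb k]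

lemma summable_and_tsum_abs_le {f b : ℕ → ℝ} (hf : ∀ k, |f k| ≤ b k)
    (hb : ∀ k, 2 * b (k + 1) ≤ b k) : Summable f ∧ ∑' k, |f k| ≤ 2 * b 0 := by
  have hgeom : HasSum (fun k => (1 / 2 : ℝ) ^ k * b 0) (2 * b 0) := by
    simpa using (hasSum_geometric_two).mul_right (b 0)
  have hle k : |f k| ≤ (1 / 2) ^ k * b 0 := (hf k).trans (le_pow_mul_of_two_mul_succ_le hb k)
  have habs : Summable fun k => |f k| := hgeom.summable.of_nonneg_of_le (fun _ => abs_nonneg _) hle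
  exact ⟨summable_abs_iff.1 habs, hasSum_le hle habs.hasSum hgeom⟩

lemma two_mul_mul_inv_le_inv_two_pow {x y : ℝ} {t : ℕ} (hy : 0 < y) (h : 2 ^ (t + 1) * x ≤ y) :
    2 * x * y⁻¹ ≤ (2 ^ t)⁻¹ := by
  rw [← div_eq_mul_inv, div_le_iff₀ hy, ← div_eq_inv_mul, le_div_iff₀ (by positivity)]
  rw [pow_succ] at h
  linarith

lemma Nat.sum_range_succ_le_two_mul {a : ℕ → ℕ} (h : ∀ k, 2 * a k ≤ a (k + 1)) (j : ℕ) :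
    ∑ k ∈ Finset.range (j + 1), a k ≤ 2 * a j := by
  induction j with
  | zero => simpa using Nat.le_mul_of_pos_left (a 0) two_pos
  | succ j ih => rw [Finset.sum_range_succ]; linarith [h j]

lemma tsum_ne_zero_of_abs_tail_lt {d c : ℕ → ℝ} (hc : Summable c) (hdc : ∀ k, |d k| ≤ |c k|)
    {j : ℕ} (hd : ∀ k < j, d k = 0) (hdj : |d j| = |c j|)
    (htail : ∑' k, |c (k + (j + 1))| < |c j|) : ∑' k, d k ≠ 0 := by
  have hcabs : Summable fun k => |c k| := hc.abs
  have hd_sum : Summable d := summable_abs_iff.1 (hcabs.of_nonneg_of_le (fun _ => abs_nonneg _) hdc)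
  have hhead : ∑ k ∈ Finset.range (j + 1), d k = d j := by
    rw [Finset.sum_range_succ, Finset.sum_eq_zero fun k hk => hd k (Finset.mem_range.1 hk),
      zero_add]
  have htail_le : |∑' k, d (k + (j + 1))| ≤ ∑' k, |c (k + (j + 1))| :=
    tsum_of_norm_bounded (f := fun k => d (k + (j + 1)))
      ((summable_nat_add_iff (j + 1)).2 hcabs).hasSum fun k => hdc _
  rw [← hd_sum.sum_add_tsum_nat_add (j + 1), hhead]
  intro h
  rw [eq_neg_of_add_eq_zero_right h, abs_neg, hdj] at htail_le
  linarith

lemma injective_coe_tsum_indicator {c : ℕ → ℝ} (hc : Summable c)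
    (htail : ∀ j, ∑' k, |c (k + (j + 1))| < |c j|) (h0 : |c 0| ≤ 1 / 4) :
    Function.Injective fun S : Set ℕ => ((∑' k, S.indicator c k : ℝ) : Circle1) := by
  classical
  intro S T hST
  by_contra hne
  have hex : ∃ k, ¬(k ∈ S ↔ k ∈ T) := by
    contrapose! hne
    exact Set.ext hne
  obtain ⟨j, hj, hbefore⟩ : ∃ j, ¬(j ∈ S ↔ j ∈ T) ∧ ∀ k < j, (k ∈ S ↔ k ∈ T) :=
    ⟨Nat.find hex, Nat.find_spec hex, fun k hk => not_not.1 (Nat.find_min hex hk)⟩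
  set d : ℕ → ℝ := fun k => S.indicator c k - T.indicator c k with hd
  have hdc k : |d k| ≤ |c k| := by
    by_cases hS : k ∈ S <;> by_cases hT : k ∈ T <;> simp [hd, hS, hT]
  have hdj : |d j| = |c j| := by
    by_cases hS : j ∈ S <;> by_cases hT : j ∈ T <;> simp_all
  have hd_before : ∀ k < j, d k = 0 := by
    intro k hk
    by_cases hS : k ∈ S <;> simp_all
  have hne0 := tsum_ne_zero_of_abs_tail_lt hc hdc hd_before hdj (htail j)
  have hcabs : Summable fun k => |c k| := hc.abs
  have hsmall : |∑' k, d k| ≤ 1 / 2 := by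
    calc |∑' k, d k| ≤ ∑' k, |c k| := tsum_of_norm_bounded (f := d) hcabs.hasSum hdc
      _ = |c 0| + ∑' k, |c (k + 1)| := hcabs.tsum_eq_zero_add
      _ ≤ 1 / 2 := by linarith [htail 0]
  have hnorm : ‖((∑' k, d k : ℝ) : Circle1)‖ = |∑' k, d k| :=
    (AddCircle.norm_coe_eq_abs_iff 1 one_ne_zero).2 (by simpa using hsmall)
  have hzero : ((∑' k, d k : ℝ) : Circle1) = 0 := by
    rw [hd, (hc.indicator S).tsum_sub (hc.indicator T), AddCircle.coe_sub]
    exact sub_eq_zero.2 hST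
  rw [hzero, norm_zero] at hnorm
  exact hne0 (abs_eq_zero.1 hnorm.symm)

lemma DensityZero.mono {A B : Set ℕ} (hAB : A ⊆ B) (hB : DensityZero B) : DensityZero A := by
  refine squeeze_zero (fun n => by positivity) (fun n => ?_) hB
  gcongr
  exact (Set.finite_Icc 1 n).inter_of_right B

lemma densityZero_of_ncard_le {A : Set ℕ} (C K : ℕ)
    (h : ∀ n, (A ∩ Set.Icc 1 n).ncard ≤ C * Nat.sqrt n + K) : DensityZero A := by
  have hsqrt : Tendsto (fun n : ℕ => √(n : ℝ)) atTop atTop :=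
    Real.tendsto_sqrt_atTop.comp tendsto_natCast_atTop_atTop
  have hlim : Tendsto (fun n : ℕ => (C : ℝ) / √n + K / n) atTop (𝓝 0) := by
    simpa using (tendsto_const_nhds.div_atTop hsqrt).add
      (tendsto_const_nhds.div_atTop tendsto_natCast_atTop_atTop)
  refine squeeze_zero' (.of_forall fun n => by positivity) ?_ hlim
  filter_upwards [eventually_ge_atTop 1] with n hn
  have hn0 : (0 : ℝ) < n := by exact_mod_cast hn
  have hs : (Nat.sqrt n : ℝ) ≤ √n := Real.le_sqrt_of_sq_le (by exact_mod_cast Nat.sqrt_le' n)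
  have hs0 : 0 < √(n : ℝ) := Real.sqrt_pos.2 hn0
  calc ((A ∩ Set.Icc 1 n).ncard : ℝ) / n ≤ (C * √n + K) / n := by
        gcongr
        exact (Nat.cast_le.2 (h n)).trans (by push_cast; gcongr)
    _ = C / √n + K / n := by
        rw [add_div]
        congr 1
        field_simp
        rw [Real.sq_sqrt hn0.le]

lemma densityZero_near_squares (r : ℕ) :
    DensityZero {n | ∃ m, n ≤ m ^ 2 + r ∧ m ^ 2 ≤ n + r} := by
  refine densityZero_of_ncard_le (2 * r + 1) ((r + 1) * (2 * r + 1)) fun N => ?_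
  let cover := (Finset.range (Nat.sqrt N + r + 1) ×ˢ Finset.range (2 * r + 1)).image
    fun mi : ℕ × ℕ => mi.1 ^ 2 + mi.2 - r
  have hsub : {n | ∃ m, n ≤ m ^ 2 + r ∧ m ^ 2 ≤ n + r} ∩ Set.Icc 1 N ⊆ cover := by
    rintro n ⟨⟨m, hm₁, hm₂⟩, -, hnN⟩
    have hm : m < Nat.sqrt N + r + 1 := by
      by_contra! h
      nlinarith [Nat.lt_succ_sqrt' N]
    simp only [cover, Finset.coe_image, Set.mem_image, Finset.mem_coe, Finset.mem_product,
      Finset.mem_range, Prod.exists]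
    exact ⟨m, n + r - m ^ 2, ⟨hm, by omega⟩, by omega⟩
  calc (_ ∩ Set.Icc 1 N).ncard ≤ cover.card := by
        simpa using Set.ncard_le_ncard hsub cover.finite_toSet
    _ ≤ (Nat.sqrt N + r + 1) * (2 * r + 1) := by
        simpa using Finset.card_image_le (s := Finset.range (Nat.sqrt N + r + 1) ×ˢ
          Finset.range (2 * r + 1)) (f := fun mi : ℕ × ℕ => mi.1 ^ 2 + mi.2 - r)
    _ = (2 * r + 1) * Nat.sqrt N + (r + 1) * (2 * r + 1) := by ring

namespace CF

variable {α : ℝ}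

lemma irrational_G (hirr : Irrational α) (n : ℕ) : Irrational (G α n) := by
  induction n with
  | zero => exact hirr
  | succ n ih => exact ih.inv.sub_intCast _

lemma G_mem_Ioo (hα : α ∈ Set.Ioo 0 1) (hirr : Irrational α) (n : ℕ) :
    G α n ∈ Set.Ioo 0 1 := by
  cases n with
  | zero => exact hα
  | succ n =>
    refine ⟨(Int.fract_nonneg _).lt_of_ne fun h => ?_, Int.fract_lt_one _⟩
    exact irrational_G hirr (n + 1) |>.ne_zero h.symm

lemma a_succ_eq (hG : ∀ n, G α n ∈ Set.Ioo 0 1) (n : ℕ) :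
    (a α (n + 1) : ℝ) = (G α n)⁻¹ - G α (n + 1) := by
  rw [a, G, Int.fract, natCast_floor_eq_intCast_floor (inv_pos.2 (hG n).1).le]
  ring

lemma one_le_a (hG : ∀ n, G α n ∈ Set.Ioo 0 1) (n : ℕ) : 1 ≤ a α (n + 1) :=
  Nat.le_floor <| by exact_mod_cast ((one_lt_inv₀ (hG n).1).2 (hG n).2).le

lemma θ_add_two (n : ℕ) : θ α (n + 2) = a α (n + 2) * θ α (n + 1) + θ α n := by
  simp only [θ, q, p]
  push_cast
  ring

lemma θ_succ (hG : ∀ n, G α n ∈ Set.Ioo 0 1) (n : ℕ) :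
    θ α (n + 1) = -G α (n + 1) * θ α n := by
  induction n with
  | zero =>
    have hα : α ≠ 0 := (hG 0).1.ne'
    simp only [θ, q, p, a_succ_eq hG 0, G]
    field_simp
    ring
  | succ n ih =>
    rw [θ_add_two, a_succ_eq hG, ih]
    field_simp [(hG (n + 1)).1.ne']
    ring

lemma abs_θ_mul (hG : ∀ n, G α n ∈ Set.Ioo 0 1) (n : ℕ) :
    |θ α n| * (q α (n + 1) + G α (n + 1) * q α n) = 1 := by
  induction n with
  | zero =>
    have hα : 0 < α := (hG 0).1
    simp only [θ, q, p, a_succ_eq hG 0, G]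
    rw [Nat.cast_one, Nat.cast_zero, one_mul, sub_zero, abs_of_pos hα]
    field_simp
    ring
  | succ n ih =>
    have hGn := (hG (n + 1)).1
    rw [θ_succ hG, abs_mul, abs_neg, abs_of_pos hGn, q, Nat.cast_add, Nat.cast_mul,
      a_succ_eq hG]
    rw [← ih]
    field_simp
    ring

lemma one_le_q (hG : ∀ n, G α n ∈ Set.Ioo 0 1) (n : ℕ) : 1 ≤ q α n := by
  induction n using Nat.twoStepInduction with
  | zero => rfl
  | one => exact one_le_a hG 0
  | more n ih _ => exact ih.trans (Nat.le_add_left _ _)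

lemma q_le_q_succ (hG : ∀ n, G α n ∈ Set.Ioo 0 1) (n : ℕ) : q α n ≤ q α (n + 1) := by
  cases n with
  | zero => exact one_le_a hG 0
  | succ n =>
    show q α (n + 1) ≤ a α (n + 2) * q α (n + 1) + q α n
    nlinarith [one_le_a hG (n + 1)]

lemma two_mul_q_le (hG : ∀ n, G α n ∈ Set.Ioo 0 1) (n : ℕ) : 2 * q α n ≤ q α (n + 2) := by
  show 2 * q α n ≤ a α (n + 2) * q α (n + 1) + q α n
  nlinarith [one_le_a hG (n + 1), q_le_q_succ hG n]

lemma two_pow_mul_q_le (hG : ∀ n, G α n ∈ Set.Ioo 0 1) {n m : ℕ} (j : ℕ) (h : n + 2 * j ≤ m) :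
    2 ^ j * q α n ≤ q α m := by
  induction j generalizing m with
  | zero => simpa using monotone_nat_of_le_succ (q_le_q_succ hG) h
  | succ j ih =>
    calc 2 ^ (j + 1) * q α n ≤ 2 * q α (n + 2 * j) := by
          rw [pow_succ, mul_comm _ 2, mul_assoc]; exact Nat.mul_le_mul_left 2 (ih le_rfl)
      _ ≤ q α (n + 2 * j + 2) := two_mul_q_le hG _
      _ ≤ q α m := monotone_nat_of_le_succ (q_le_q_succ hG) (by omega)

lemma abs_θ_le (hG : ∀ n, G α n ∈ Set.Ioo 0 1) (n : ℕ) : |θ α n| ≤ (q α (n + 1) : ℝ)⁻¹ := by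
  have hq : (0 : ℝ) < q α (n + 1) := by exact_mod_cast one_le_q hG (n + 1)
  have := (hG (n + 1)).1
  rw [eq_inv_of_mul_eq_one_left (abs_θ_mul hG n)]
  gcongr
  exact le_add_of_nonneg_right (by positivity)

lemma inv_two_mul_lt_abs_θ (hG : ∀ n, G α n ∈ Set.Ioo 0 1) (n : ℕ) :
    (2 * q α (n + 1) : ℝ)⁻¹ < |θ α n| := by
  have hq : (q α n : ℝ) ≤ q α (n + 1) := by exact_mod_cast q_le_q_succ hG n
  have hq0 : (0 : ℝ) < q α n := by exact_mod_cast one_le_q hG n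
  have hGn := hG (n + 1)
  rw [eq_inv_of_mul_eq_one_left (abs_θ_mul hG n)]
  have := mul_lt_of_lt_one_left hq0 hGn.2
  gcongr
  · exact add_pos_of_pos_of_nonneg (hq0.trans_le hq) (mul_nonneg hGn.1.le hq0.le)
  · linarith

lemma norm_coe_q_mul_θ_le (m n : ℕ) :
    ‖((q α n * θ α m : ℝ) : Circle1)‖ ≤ q α m * |θ α n| := by
  have hint : (q α n * θ α m : ℝ) = q α m * θ α n + ((q α m * p α n - q α n * p α m : ℤ) : ℝ) := by
    simp only [θ]
    push_cast
    ring
  rw [hint, norm_coe_add_intCast]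
  exact (norm_coe_le_abs _).trans (by rw [abs_mul, Nat.abs_cast])

def M (k : ℕ) : ℕ := (k + 2) ^ 2

def ξ (α : ℝ) (S : Set ℕ) : ℝ := ∑' k, S.indicator (fun k => θ α (M k)) k

lemma four_mul_q_M_le (hG : ∀ n, G α n ∈ Set.Ioo 0 1) (k i : ℕ) :
    4 * q α (M k + i) ≤ q α (M (k + 1) + i) :=
  two_pow_mul_q_le hG 2 (by simp only [M]; ring_nf; omega)

lemma summable_and_tsum_abs_θ_M_le (hG : ∀ n, G α n ∈ Set.Ioo 0 1) (N : ℕ) :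
    (Summable fun k => θ α (M (k + N))) ∧
      ∑' k, |θ α (M (k + N))| ≤ 2 * (q α (M N + 1) : ℝ)⁻¹ := by
  have hb k : 2 * (q α (M (k + 1 + N) + 1) : ℝ)⁻¹ ≤ (q α (M (k + N) + 1) : ℝ)⁻¹ := by
    have hq : (0 : ℝ) < q α (M (k + N) + 1) := by exact_mod_cast one_le_q hG _
    have h4 : 4 * (q α (M (k + N) + 1) : ℝ) ≤ q α (M (k + 1 + N) + 1) := by
      rw [show k + 1 + N = k + N + 1 by ring]
      exact_mod_cast four_mul_q_M_le hG (k + N) 1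
    calc 2 * (q α (M (k + 1 + N) + 1) : ℝ)⁻¹ ≤ 2 * (4 * q α (M (k + N) + 1) : ℝ)⁻¹ := by
          gcongr
      _ ≤ (q α (M (k + N) + 1) : ℝ)⁻¹ := by
          rw [mul_inv, ← mul_assoc]
          exact mul_le_of_le_one_left (by positivity) (by norm_num)
  simpa only [zero_add] using summable_and_tsum_abs_le (fun k => abs_θ_le hG (M (k + N))) hb

lemma summable_θ_M (hG : ∀ n, G α n ∈ Set.Ioo 0 1) : Summable fun k => θ α (M k) := by
  simpa using (summable_and_tsum_abs_θ_M_le hG 0).1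

lemma injective_coe_ξ (hG : ∀ n, G α n ∈ Set.Ioo 0 1) :
    Function.Injective fun S => (ξ α S : Circle1) := by
  refine injective_coe_tsum_indicator (summable_θ_M hG) (fun j => ?_) ?_
  · have hq : (0 : ℝ) < q α (M j + 1) := by exact_mod_cast one_le_q hG _
    have h4 : 4 * (q α (M j + 1) : ℝ) ≤ q α (M (j + 1) + 1) := by
      exact_mod_cast four_mul_q_M_le hG j 1
    calc ∑' k, |θ α (M (k + (j + 1)))| ≤ 2 * (q α (M (j + 1) + 1) : ℝ)⁻¹ :=
          (summable_and_tsum_abs_θ_M_le hG (j + 1)).2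
      _ ≤ 2 * (4 * q α (M j + 1) : ℝ)⁻¹ := by gcongr
      _ = (2 * q α (M j + 1) : ℝ)⁻¹ := by field_simp; norm_num
      _ < |θ α (M j)| := inv_two_mul_lt_abs_θ hG _
  · have h4 : 4 ≤ q α (M 0 + 1) := by
      have := two_pow_mul_q_le hG (n := 1) (m := M 0 + 1) 2 (by simp [M])
      have := one_le_q hG 1
      omega
    calc |θ α (M 0)| ≤ (q α (M 0 + 1) : ℝ)⁻¹ := abs_θ_le hG _
      _ ≤ 1 / 4 := by rw [one_div]; gcongr; exact_mod_cast h4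

lemma sum_norm_coe_q_mul_indicator_le (hG : ∀ n, G α n ∈ Set.Ioo 0 1) (S : Set ℕ) {N n t : ℕ}
    (h : ∀ k < N, M k + 2 * t < n) :
    ∑ k ∈ Finset.range N, ‖((q α n * S.indicator (fun k => θ α (M k)) k : ℝ) : Circle1)‖ ≤
      (2 ^ t)⁻¹ := by
  have hterm k : ‖((q α n * S.indicator (fun k => θ α (M k)) k : ℝ) : Circle1)‖ ≤
      q α (M k) * |θ α n| := by
    by_cases hk : k ∈ S
    · simpa [Set.indicator_of_mem hk] using norm_coe_q_mul_θ_le (M k) n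
    · simp only [Set.indicator_of_notMem hk, mul_zero, AddCircle.coe_zero, norm_zero]
      positivity
  refine (Finset.sum_le_sum fun k _ => hterm k).trans ?_
  cases N with
  | zero => simp
  | succ j =>
    have hq : (0 : ℝ) < q α (n + 1) := by exact_mod_cast one_le_q hG _
    have hsum : ∑ k ∈ Finset.range (j + 1), q α (M k) ≤ 2 * q α (M j) := by
      refine Nat.sum_range_succ_le_two_mul (fun k => ?_) j
      have h4 := four_mul_q_M_le hG k 0
      simp only [add_zero] at h4
      omega
    have hgrow : 2 ^ (t + 1) * q α (M j) ≤ q α (n + 1) :=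
      two_pow_mul_q_le hG (t + 1) (by linarith [h j (by omega)])
    calc ∑ k ∈ Finset.range (j + 1), (q α (M k) : ℝ) * |θ α n|
        = (∑ k ∈ Finset.range (j + 1), q α (M k) : ℕ) * |θ α n| := by
          rw [Nat.cast_sum, Finset.sum_mul]
      _ ≤ (2 * q α (M j) : ℕ) * (q α (n + 1) : ℝ)⁻¹ := by
          gcongr
          exact abs_θ_le hG n
      _ ≤ (2 ^ t)⁻¹ := by
          push_cast
          exact two_mul_mul_inv_le_inv_two_pow hq (by exact_mod_cast hgrow)

lemma q_mul_abs_tsum_indicator_le (hG : ∀ n, G α n ∈ Set.Ioo 0 1) (S : Set ℕ) {N n t : ℕ}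
    (h : n + 2 * t < M N) :
    q α n * |∑' k, S.indicator (fun k => θ α (M k)) (k + N)| ≤ (2 ^ t)⁻¹ := by
  obtain ⟨hsum, htsum⟩ := summable_and_tsum_abs_θ_M_le hG N
  have habs : |∑' k, S.indicator (fun k => θ α (M k)) (k + N)| ≤ 2 * (q α (M N + 1) : ℝ)⁻¹ := by
    refine (tsum_of_norm_bounded (f := fun k => S.indicator (fun k => θ α (M k)) (k + N))
      hsum.abs.hasSum fun k => ?_).trans htsum
    by_cases hk : k + N ∈ S <;> simp [Set.indicator_of_mem, Set.indicator_of_notMem, hk]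
  have hq : (0 : ℝ) < q α (M N + 1) := by exact_mod_cast one_le_q hG _
  have hgrow : 2 ^ (t + 1) * q α n ≤ q α (M N + 1) := two_pow_mul_q_le hG (t + 1) (by omega)
  calc q α n * |∑' k, S.indicator (fun k => θ α (M k)) (k + N)|
      ≤ q α n * (2 * (q α (M N + 1) : ℝ)⁻¹) := by gcongr
    _ = 2 * q α n * (q α (M N + 1) : ℝ)⁻¹ := by ring
    _ ≤ (2 ^ t)⁻¹ := two_mul_mul_inv_le_inv_two_pow hq (by exact_mod_cast hgrow)

lemma norm_q_smul_ξ_le (hG : ∀ n, G α n ∈ Set.Ioo 0 1) (S : Set ℕ) {n t : ℕ}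
    (hn : ∀ k, M k + 2 * t < n ∨ n + 2 * t < M k) :
    ‖(q α n : ℤ) • (ξ α S : Circle1)‖ ≤ 2 * (2 ^ t)⁻¹ := by
  have hex : ∃ N, n < M N := ⟨n, by simp only [M]; nlinarith⟩
  obtain ⟨N, hN, hmin⟩ : ∃ N, n < M N ∧ ∀ k < N, ¬n < M k :=
    ⟨Nat.find hex, Nat.find_spec hex, fun k hk => Nat.find_min hex hk⟩
  have hhead : ∀ k < N, M k + 2 * t < n := fun k hk =>
    (hn k).resolve_right fun h => hmin k hk (by omega)
  have htail : n + 2 * t < M N := (hn N).resolve_left fun h => by omega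
  have hsum := (summable_θ_M hG).indicator S
  let coe : ℝ →+ Circle1 := QuotientAddGroup.mk' _
  rw [← AddCircle.coe_zsmul, zsmul_eq_mul, Int.cast_natCast, ξ,
    ← hsum.sum_add_tsum_nat_add N, mul_add, Finset.mul_sum, AddCircle.coe_add]
  calc _ ≤ ‖coe (∑ k ∈ Finset.range N, q α n * S.indicator (fun k => θ α (M k)) k)‖ +
        ‖((q α n * ∑' k, S.indicator (fun k => θ α (M k)) (k + N) : ℝ) : Circle1)‖ :=
        norm_add_le _ _
    _ ≤ (2 ^ t)⁻¹ + (2 ^ t)⁻¹ := by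
        gcongr
        · rw [map_sum]
          exact (norm_sum_le _ _).trans (sum_norm_coe_q_mul_indicator_le hG S hhead)
        · refine (norm_coe_le_abs _).trans ?_
          rw [abs_mul, Nat.abs_cast]
          exact q_mul_abs_tsum_indicator_le hG S htail
    _ = 2 * (2 ^ t)⁻¹ := by ring

lemma ξ_mem_statCharSet (hG : ∀ n, G α n ∈ Set.Ioo 0 1) (S : Set ℕ) :
    (ξ α S : Circle1) ∈ statCharSet (fun n => (q α n : ℤ)) := by
  intro ε hε
  obtain ⟨t, ht⟩ : ∃ t : ℕ, (1 / 2 : ℝ) ^ t < ε / 2 :=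
    exists_pow_lt_of_lt_one (half_pos hε) (by norm_num)
  refine (densityZero_near_squares (2 * t)).mono fun n hn => ?_
  by_contra hfar
  simp only [Set.mem_ofPred_eq, not_exists, not_and, not_le] at hfar
  have hbound := norm_q_smul_ξ_le hG S (n := n) (t := t) fun k => by
    have := hfar (k + 2)
    simp only [M]
    omega
  rw [← one_div, ← one_div_pow] at hbound
  exact absurd (hn.trans hbound) (by linarith)

end CF

/-- **Theorem B.** For irrational `α ∈ (0,1)` with convergent denominators `(qₙ)`,
the statistically characterized subgroup `t^s_(qₙ)(𝕋)` is uncountable. -/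
theorem stmt_0 (α : ℝ) (hα : α ∈ Set.Ioo (0 : ℝ) 1) (hirr : Irrational α) :
    ¬ (statCharSet (fun n => (q α n : ℤ))).Countable := by
  have hG := G_mem_Ioo hα hirr
  intro hcount
  have := hcount.to_subtype
  obtain ⟨g, hg⟩ := Countable.exists_injective_nat (statCharSet fun n => (q α n : ℤ))
  refine Function.cantor_injective (fun S => g ⟨ξ α S, ξ_mem_statCharSet hG S⟩) ?_
  exact hg.comp fun S T h => injective_coe_ξ hG (congrArg Subtype.val h)
end
end

section
/- Let α = [0; a₁, a₂, …] ∈ (0,1) be irrational with (aₙ) bounded, let (qₙ) be the denominators of the convergents of α, and let (xₙ) be the increasing enumeration of the set {r qₙ : n ∈ ℕ, 1 ≤ r ≤ a_{n+1}}. Then t^s_{(qₙ)}(𝕋) = t^s_{(xₙ)}(𝕋). -/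
open Filter Topology

noncomputable section

open CF

/-! Each `x m` is `r * q n` with `1 ≤ r ≤ M`, and each `q n` is some `x m`. Comparing positions in
the two increasing sequences gives `n ≤ m + 1` in the first case and `m < (n + 2) * M` in the
second, the latter by counting the at most `(n + 2) * M` products `r * q k` below `q n`. Since
`‖r • z‖ ≤ M * ‖z‖`, the indices `m` with `ε ≤ ‖x m • y‖` thus map, linearly and with fibres of
size at most `M`, into the indices `n` with `ε / M ≤ ‖q n • y‖`; conversely the indices with
`ε ≤ ‖q n • y‖` map with fibres of size at most `2` into those with `ε ≤ ‖x m • y‖`. Natural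
density zero is carried backwards along such maps. -/

section Density

variable {A B : Set ℕ}

theorem ncard_inter_Icc_le_of_rel (R : ℕ → ℕ → Prop) (K L N : ℕ)
    (hAB : ∀ m ∈ A, 1 ≤ m → ∃ b ∈ B, b ≤ K * m ∧ R m b)
    (hfib : ∀ b, {m | R m b}.encard ≤ L) :
    (A ∩ Set.Icc 1 N).ncard ≤ L * ((B ∩ Set.Icc 1 (K * N)).ncard + 1) := by
  classical
  set T := (Finset.Iic (K * N)).filter (· ∈ B)
  have hcover : A ∩ Set.Icc 1 N ⊆ ⋃ b ∈ T, {m | R m b} := by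
    rintro m ⟨hmA, hm1, hmN⟩
    obtain ⟨b, hbB, hbm, hR⟩ := hAB m hmA hm1
    exact Set.mem_biUnion (x := b)
      (by simpa [T, hbB] using hbm.trans (Nat.mul_le_mul_left K hmN)) hR
  have hT : (T.card : ℕ∞) ≤ (B ∩ Set.Icc 1 (K * N)).encard + 1 := by
    rw [← Set.encard_coe_eq_coe_finsetCard, ← Set.encard_insert_of_notMem (a := 0) (by simp)]
    refine Set.encard_le_encard fun b hb => ?_
    simp only [T, Finset.coe_filter, Finset.mem_Iic] at hb
    rcases Nat.eq_zero_or_pos b with rfl | hb1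
    · exact Set.mem_insert _ _
    · exact Set.mem_insert_of_mem _ ⟨hb.2, hb1, hb.1⟩
  have hcount : (A ∩ Set.Icc 1 N).encard ≤ L * ((B ∩ Set.Icc 1 (K * N)).encard + 1) :=
    calc (A ∩ Set.Icc 1 N).encard
        ≤ ∑ b ∈ T, {m | R m b}.encard :=
          (Set.encard_le_encard hcover).trans (T.set_encard_biUnion_le _)
      _ ≤ ∑ _b ∈ T, (L : ℕ∞) := Finset.sum_le_sum fun b _ => hfib b
      _ = L * T.card := by rw [Finset.sum_const, nsmul_eq_mul, mul_comm]
      _ ≤ L * ((B ∩ Set.Icc 1 (K * N)).encard + 1) := by gcongr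
  rw [← (Set.finite_Icc 1 N).inter_of_right A |>.cast_ncard_eq,
    ← (Set.finite_Icc 1 (K * N)).inter_of_right B |>.cast_ncard_eq] at hcount
  exact_mod_cast hcount

namespace DensityZero

theorem tendsto_ncard_inter_Icc_mul_div (hB : DensityZero B) (K : ℕ) :
    Tendsto (fun N : ℕ => ((B ∩ Set.Icc 1 (K * N)).ncard : ℝ) / N) atTop (𝓝 0) := by
  rcases Nat.eq_zero_or_pos K with rfl | hK
  · simp
  have hK' : (K : ℝ) ≠ 0 := by positivity
  have hcomp := (hB.comp (tendsto_id.const_mul_atTop' hK)).const_mul (K : ℝ)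
  rw [mul_zero] at hcomp
  refine hcomp.congr fun N => ?_
  simp only [Function.comp_apply, id, Nat.cast_mul]
  rw [mul_div_assoc', mul_div_mul_left _ _ hK']

theorem of_rel (hB : DensityZero B) (R : ℕ → ℕ → Prop) (K L : ℕ)
    (hAB : ∀ m ∈ A, 1 ≤ m → ∃ b ∈ B, b ≤ K * m ∧ R m b)
    (hfib : ∀ b, {m | R m b}.encard ≤ L) : DensityZero A := by
  have hbound := ((hB.tendsto_ncard_inter_Icc_mul_div K).add
    tendsto_one_div_atTop_nhds_zero_nat).const_mul (L : ℝ)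
  rw [add_zero, mul_zero] at hbound
  refine tendsto_of_tendsto_of_tendsto_of_le_of_le tendsto_const_nhds hbound
    (fun N => by positivity) fun N => ?_
  have h := ncard_inter_Icc_le_of_rel R K L N hAB hfib
  calc ((A ∩ Set.Icc 1 N).ncard : ℝ) / N
      ≤ (L * ((B ∩ Set.Icc 1 (K * N)).ncard + 1) : ℝ) / N := by gcongr; exact_mod_cast h
    _ = L * (((B ∩ Set.Icc 1 (K * N)).ncard : ℝ) / N + 1 / N) := by ring

end DensityZero

end Density

namespace CF

variable {α : ℝ}

theorem irrational_G_and_mem_Ioo (hα : α ∈ Set.Ioo 0 1) (hirr : Irrational α) (n : ℕ) :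
    Irrational (G α n) ∧ G α n ∈ Set.Ioo 0 1 := by
  induction n with
  | zero => exact ⟨hirr, hα⟩
  | succ n ih =>
    have hfract : Irrational (Int.fract (G α n)⁻¹) := ih.1.inv.sub_intCast _
    refine ⟨hfract, (Int.fract_nonneg _).lt_of_ne fun h => ?_, Int.fract_lt_one _⟩
    exact hfract.ne_int 0 (by simpa using h.symm)

theorem one_le_a_succ (hα : α ∈ Set.Ioo 0 1) (hirr : Irrational α) (n : ℕ) :
    1 ≤ a α (n + 1) := by
  obtain ⟨-, hpos, hlt⟩ := irrational_G_and_mem_Ioo hα hirr n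
  exact Nat.le_floor (by exact_mod_cast ((one_lt_inv₀ hpos).2 hlt).le)

theorem one_le_q_s9 (ha : ∀ n, 1 ≤ a α (n + 1)) : ∀ n, 1 ≤ q α n
  | 0 => le_rfl
  | 1 => ha 0
  | n + 2 => (one_le_q_s9 ha n).trans (Nat.le_add_left _ _)

theorem q_lt_q_succ (ha : ∀ n, 1 ≤ a α (n + 1)) {n : ℕ} (hn : 1 ≤ n) :
    q α n < q α (n + 1) := by
  obtain ⟨n, rfl⟩ := Nat.exists_eq_add_of_le' hn
  change q α (n + 1) < q α (n + 2)
  have hq : q α (n + 2) = a α (n + 2) * q α (n + 1) + q α n := rfl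
  have hle : q α (n + 1) ≤ a α (n + 2) * q α (n + 1) :=
    Nat.le_mul_of_pos_left _ (ha (n + 1))
  have := one_le_q_s9 ha n
  omega

theorem strictMonoOn_q (ha : ∀ n, 1 ≤ a α (n + 1)) : StrictMonoOn (q α) (Set.Ici 1) :=
  strictMonoOn_Ici_of_pred_lt fun m hm => by
    obtain ⟨n, rfl⟩ := Nat.exists_eq_add_of_lt hm
    simpa [Nat.add_comm 1 n] using q_lt_q_succ ha (Nat.le_add_left 1 n)

theorem monotone_q (ha : ∀ n, 1 ≤ a α (n + 1)) : Monotone (q α) :=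
  monotone_nat_of_le_succ fun
    | 0 => ha 0
    | n + 1 => (q_lt_q_succ ha n.succ_pos).le

theorem le_succ_of_q_le_q (ha : ∀ n, 1 ≤ a α (n + 1)) {k n : ℕ} (h : q α k ≤ q α n) :
    k ≤ n + 1 := by
  by_contra! hk
  have := strictMonoOn_q ha (Set.mem_Ici.2 n.succ_pos) (Set.mem_Ici.2 (by omega)) hk
  have := monotone_q ha n.le_succ
  omega

theorem encard_setOf_q_eq_le_two (ha : ∀ n, 1 ≤ a α (n + 1)) (c : ℕ) :
    {n | q α n = c}.encard ≤ 2 := by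
  -- `q 0 = q 1` when `a 1 = 1`, so `q` is injective only on `n ≥ 1`.
  have hsub : {n | q α n = c} ⊆ insert 0 ({n | q α n = c} ∩ Set.Ici 1) := fun n hn => by
    rcases Nat.eq_zero_or_pos n with rfl | hn1
    · exact Set.mem_insert _ _
    · exact Set.mem_insert_of_mem _ ⟨hn, hn1⟩
  have hsingle : ({n | q α n = c} ∩ Set.Ici 1).encard ≤ 1 :=
    Set.encard_le_one_iff.2 fun m n hm hn =>
      (strictMonoOn_q ha).injOn hm.2 hn.2 (hm.1.trans hn.1.symm)
  calc {n | q α n = c}.encard ≤ ({n | q α n = c} ∩ Set.Ici 1).encard + 1 :=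
        (Set.encard_le_encard hsub).trans (Set.encard_insert_le _ _)
    _ ≤ 2 := by
        rw [show (2 : ℕ∞) = 1 + 1 from rfl]
        gcongr

def qMultiples (α : ℝ) : Set ℕ :=
  {m : ℕ | ∃ n r : ℕ, 1 ≤ r ∧ r ≤ a α (n + 1) ∧ m = r * q α n}

variable {x : ℕ → ℕ}

theorem exists_eq_q (hrange : Set.range x = qMultiples α) (ha : ∀ n, 1 ≤ a α (n + 1))
    (n : ℕ) : ∃ m, x m = q α n := by
  have : q α n ∈ qMultiples α := ⟨n, 1, le_rfl, ha n, (one_mul _).symm⟩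
  rwa [← hrange] at this

theorem sub_one_le_of_eq_q (hx : StrictMono x) (hrange : Set.range x = qMultiples α)
    (ha : ∀ n, 1 ≤ a α (n + 1)) : ∀ {k m : ℕ}, x m = q α k → k - 1 ≤ m
  | 0, _, _ | 1, _, _ => Nat.zero_le _
  | k + 2, m, hm => by
    obtain ⟨m', hm'⟩ := exists_eq_q hrange ha (k + 1)
    have hlt : m' < m := hx.lt_iff_lt.1 (hm' ▸ hm ▸ q_lt_q_succ ha k.succ_pos)
    have := sub_one_le_of_eq_q hx hrange ha hm'
    omega

theorem le_succ_of_eq_mul_q (hx : StrictMono x) (hrange : Set.range x = qMultiples α)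
    (ha : ∀ n, 1 ≤ a α (n + 1)) {m n r : ℕ} (hm : x m = r * q α n) (hr : 1 ≤ r) :
    n ≤ m + 1 := by
  obtain ⟨m', hm'⟩ := exists_eq_q hrange ha n
  have hle : m' ≤ m := hx.le_iff_le.1 (hm' ▸ hm ▸ Nat.le_mul_of_pos_left _ hr)
  have := sub_one_le_of_eq_q hx hrange ha hm'
  omega

theorem succ_le_of_eq_q (hx : StrictMono x) (hrange : Set.range x = qMultiples α)
    (ha : ∀ n, 1 ≤ a α (n + 1)) {M : ℕ} (hM : ∀ n, a α (n + 1) ≤ M) {m n : ℕ}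
    (hm : x m = q α n) : m + 1 ≤ (n + 2) * M := by
  classical
  have hsub : (Finset.range (m + 1)).image x ⊆
      (Finset.Iic (n + 1) ×ˢ Finset.Icc 1 M).image fun p => p.2 * q α p.1 := by
    intro y hy
    obtain ⟨j, hj, rfl⟩ := Finset.mem_image.1 hy
    obtain ⟨k, r, hr1, hra, hxj⟩ : x j ∈ qMultiples α := hrange ▸ ⟨j, rfl⟩
    have hqk : q α k ≤ q α n := calc
      q α k ≤ r * q α k := Nat.le_mul_of_pos_left _ hr1
      _ = x j := hxj.symm
      _ ≤ x m := hx.monotone (Nat.lt_succ_iff.1 (Finset.mem_range.1 hj))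
      _ = q α n := hm
    refine Finset.mem_image.2 ⟨(k, r), ?_, hxj.symm⟩
    simp only [Finset.mem_product, Finset.mem_Iic, Finset.mem_Icc]
    exact ⟨le_succ_of_q_le_q ha hqk, hr1, hra.trans (hM k)⟩
  calc m + 1 = ((Finset.range (m + 1)).image x).card := by
        rw [Finset.card_image_of_injective _ hx.injective, Finset.card_range]
    _ ≤ (Finset.Iic (n + 1) ×ˢ Finset.Icc 1 M).card :=
        (Finset.card_le_card hsub).trans Finset.card_image_le
    _ = (n + 2) * M := by simp

end CF

section StatCharSet

variable {α : ℝ} {x : ℕ → ℕ} {M : ℕ}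

theorem statCharSet_q_subset (hx : StrictMono x) (hrange : Set.range x = qMultiples α)
    (ha : ∀ n, 1 ≤ a α (n + 1)) (hM : ∀ n, a α (n + 1) ≤ M) :
    statCharSet (fun n => (q α n : ℤ)) ⊆ statCharSet (fun n => (x n : ℤ)) := by
  intro y hy ε hε
  have hM0 : (0 : ℝ) < M := by exact_mod_cast (ha 0).trans (hM 0)
  refine (hy (ε / M) (by positivity)).of_rel (fun m n => ∃ r ∈ Finset.Icc 1 M, x m = r * q α n)
    2 M (fun m hm hm1 => ?_) fun n => ?_
  · obtain ⟨n, r, hr1, hra, hxm⟩ : x m ∈ qMultiples α := hrange ▸ ⟨m, rfl⟩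
    have hrM : r ≤ M := hra.trans (hM n)
    refine ⟨n, ?_, by linarith [le_succ_of_eq_mul_q hx hrange ha hxm hr1],
      r, Finset.mem_Icc.2 ⟨hr1, hrM⟩, hxm⟩
    change ε / M ≤ ‖(q α n : ℤ) • y‖
    rw [div_le_iff₀ hM0]
    calc ε ≤ ‖(x m : ℤ) • y‖ := hm
      _ = ‖r • ((q α n : ℤ) • y)‖ := by rw [hxm, Nat.cast_mul, mul_smul, natCast_zsmul]
      _ ≤ r * ‖(q α n : ℤ) • y‖ := norm_nsmul_le
      _ ≤ ‖(q α n : ℤ) • y‖ * M := by rw [mul_comm]; gcongr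
  · have hmaps : Set.MapsTo x {m | ∃ r ∈ Finset.Icc 1 M, x m = r * q α n}
        ((Finset.Icc 1 M).image (· * q α n) : Set ℕ) := fun m ⟨r, hr, hxm⟩ =>
      Finset.mem_coe.2 (Finset.mem_image.2 ⟨r, hr, hxm.symm⟩)
    calc _ ≤ ((Finset.Icc 1 M).image (· * q α n) : Set ℕ).encard :=
          Set.encard_le_encard_of_injOn hmaps hx.injective.injOn
      _ ≤ M := by
          rw [Set.encard_coe_eq_coe_finsetCard]
          exact_mod_cast Finset.card_image_le.trans (by simp)

theorem statCharSet_subset_q (hx : StrictMono x) (hrange : Set.range x = qMultiples α)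
    (ha : ∀ n, 1 ≤ a α (n + 1)) (hM : ∀ n, a α (n + 1) ≤ M) :
    statCharSet (fun n => (x n : ℤ)) ⊆ statCharSet (fun n => (q α n : ℤ)) := by
  intro y hy ε hε
  refine (hy ε hε).of_rel (fun n m => q α n = x m) (3 * M) 2 (fun n hn hn1 => ?_)
    fun m => encard_setOf_q_eq_le_two ha (x m)
  obtain ⟨m, hm⟩ := exists_eq_q hrange ha n
  refine ⟨m, ?_, ?_, hm.symm⟩
  · change ε ≤ ‖(x m : ℤ) • y‖
    rwa [hm]
  · nlinarith [succ_le_of_eq_q hx hrange ha hM hm]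

end StatCharSet

/-- **Proposition 3.3.** For bounded partial quotients, `t^s_(qₙ)(𝕋) = t^s_(xₙ)(𝕋)`. -/
theorem stmt_9 (α : ℝ) (hα : α ∈ Set.Ioo (0 : ℝ) 1) (hirr : Irrational α)
    (M : ℕ) (hbd : ∀ n, 1 ≤ n → a α n ≤ M)
    (x : ℕ → ℕ) (hmono : StrictMono x)
    (hrange : Set.range x =
      {m : ℕ | ∃ n r : ℕ, 1 ≤ r ∧ r ≤ a α (n + 1) ∧ m = r * q α n}) :
    statCharSet (fun n => (q α n : ℤ)) = statCharSet (fun n => (x n : ℤ)) := by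
  have ha := one_le_a_succ hα hirr
  have hM : ∀ n, a α (n + 1) ≤ M := fun n => hbd (n + 1) n.succ_pos
  exact (statCharSet_q_subset hmono hrange ha hM).antisymm
    (statCharSet_subset_q hmono hrange ha hM)
end
end
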